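/- Let $r \ge 1$, and for each $k = 1, \ldots, r$ let $n_k$ be a natural number and let $x_{k,0}, x_{k,1}, \ldots, x_{k,n_k}$ be pairwise distinct real numbers. For each multi-index $i = (i_1, \ldots, i_r)$ with $0 \le i_k \le n_k$, let $f_i$ and $\tilde{f}_i$ be real numbers, and let $(a_j)$ and $(\tilde{a}_j)$, indexed by multi-indices $j = (j_1, \ldots, j_r)$ with $0 \le j_k \le n_k$, be the unique real families satisfying $\sum_{j} a_j \prod_{k=1}^r x_{k,i_k}^{j_k} = f_i$ and $\sum_{j} \tilde{a}_j \prod_{k=1}^r x_{k,i_k}^{j_k} = \tilde{f}_i$ for all multi-indices $i$. Set $\varepsilon = \max_i |f_i - \tilde{f}_i|$, and for each $k$ set $\lambda_k = \min_{i \ne j} |x_{k,j} - x_{k,i}|$ and $M_k = \max\{1, \max_{0 \le j \le n_k} |x_{k,j}|\}$. Then $\max_{j} |a_j - \tilde{a}_j| \le \varepsilon \prod_{k=1}^{r} \dfrac{(n_k+1)\, M_k^{n_k} \binom{n_k}{\lfloor n_k/2 \rfloor}}{\lambda_k^{n_k}}$. -/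
import Mathlib

open Finset Polynomial

lemma coeff_prod_X_sub_C_abs_le {ι : Type*} (s : Finset ι) (v : ι → ℝ) (M : ℝ) (hM : 1 ≤ M)
    (hv : ∀ m ∈ s, |v m| ≤ M) : ∀ k : ℕ,
    |(∏ m ∈ s, (X - C (v m))).coeff k| ≤ (s.card.choose k) * M ^ s.card := by
  classical
  induction s using Finset.cons_induction with
  | empty =>
    intro k
    rcases k with _ | k <;> simp [Polynomial.coeff_one]
  | cons a t hat ih =>
    intro k
    have hva : |v a| ≤ M := hv a (Finset.mem_cons_self a t)
    have hvt : ∀ m ∈ t, |v m| ≤ M := fun m hm => hv m (Finset.mem_cons_of_mem hm)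
    have ih' := ih hvt
    have hM0 : (0:ℝ) ≤ M := le_trans zero_le_one hM
    have hMpow : M ^ t.card ≤ M ^ (t.card + 1) := by
      calc M ^ t.card = 1 * M ^ t.card := (one_mul _).symm
        _ ≤ M * M ^ t.card := by gcongr
        _ = M ^ (t.card + 1) := by ring
    rw [Finset.prod_cons, Finset.card_cons]
    have hexp : (X - C (v a)) * ∏ m ∈ t, (X - C (v m))
        = X * ∏ m ∈ t, (X - C (v m)) - C (v a) * ∏ m ∈ t, (X - C (v m)) := by ring
    rcases k with _ | k
    · rw [hexp, Polynomial.coeff_sub, Polynomial.coeff_C_mul]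
      simp only [Polynomial.mul_coeff_zero, Polynomial.coeff_X_zero, zero_mul, zero_sub, abs_neg,
        abs_mul]
      calc |v a| * |(∏ m ∈ t, (X - C (v m))).coeff 0|
          ≤ M * ((t.card.choose 0) * M ^ t.card) := by
            apply mul_le_mul hva (ih' 0) (abs_nonneg _) hM0
        _ ≤ ((t.card + 1).choose 0) * M ^ (t.card + 1) := by
            simp only [Nat.choose_zero_right, Nat.cast_one, one_mul, Nat.choose_self,
              pow_succ]
            nlinarith [pow_nonneg hM0 t.card]
    · rw [hexp, Polynomial.coeff_sub, Polynomial.coeff_C_mul, Polynomial.coeff_X_mul]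
      calc |(∏ m ∈ t, (X - C (v m))).coeff k - v a * (∏ m ∈ t, (X - C (v m))).coeff (k+1)|
          ≤ |(∏ m ∈ t, (X - C (v m))).coeff k| + |v a| * |(∏ m ∈ t, (X - C (v m))).coeff (k+1)| := by
            rw [← abs_mul]; exact abs_sub _ _
        _ ≤ (t.card.choose k) * M ^ t.card + M * ((t.card.choose (k+1)) * M ^ t.card) := by
            exact add_le_add (ih' k) (mul_le_mul hva (ih' (k+1)) (abs_nonneg _) hM0)
        _ ≤ (t.card.choose k) * M ^ (t.card + 1) + (t.card.choose (k+1)) * M ^ (t.card+1) := by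
            have h1 : ((t.card.choose k : ℝ)) * M ^ t.card ≤ (t.card.choose k) * M ^ (t.card + 1) := by
              exact mul_le_mul_of_nonneg_left hMpow (Nat.cast_nonneg _)
            have h2 : M * ((t.card.choose (k+1) : ℝ) * M ^ t.card) = (t.card.choose (k+1)) * M ^ (t.card + 1) := by
              rw [pow_succ]; ring
            linarith
        _ = ((t.card + 1).choose (k+1)) * M ^ (t.card + 1) := by
            rw [Nat.choose_succ_succ]
            push_cast
            ring

lemma basis_eq_C_mul_prod (N : ℕ) (v : Fin (N+1) → ℝ) (i : Fin (N+1)) :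
    Lagrange.basis Finset.univ v i
      = C (∏ m ∈ Finset.univ.erase i, (v i - v m)⁻¹) * ∏ m ∈ Finset.univ.erase i, (X - C (v m)) := by
  unfold Lagrange.basis Lagrange.basisDivisor
  rw [Finset.prod_mul_distrib, ← map_prod]

lemma coeff_basis_abs_le (N : ℕ) (v : Fin (N+1) → ℝ)
    (lam M : ℝ) (hlam_pos : 0 < lam) (hlam : ∀ i m : Fin (N+1), m ≠ i → lam ≤ |v i - v m|)
    (hM1 : 1 ≤ M) (hMv : ∀ i, |v i| ≤ M) (i : Fin (N+1)) (k : ℕ) :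
    |(Lagrange.basis Finset.univ v i).coeff k| ≤ M ^ N * (N.choose (N / 2)) / lam ^ N := by
  have hcard : (Finset.univ.erase i).card = N := by
    rw [Finset.card_erase_of_mem (Finset.mem_univ i), Finset.card_univ, Fintype.card_fin]
    rfl
  rw [basis_eq_C_mul_prod, Polynomial.coeff_C_mul, abs_mul, Finset.abs_prod]
  have h1 : ∏ m ∈ Finset.univ.erase i, |(v i - v m)⁻¹| ≤ (lam ^ N)⁻¹ := by
    calc ∏ m ∈ Finset.univ.erase i, |(v i - v m)⁻¹|
        ≤ ∏ m ∈ Finset.univ.erase i, lam⁻¹ := by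
          apply Finset.prod_le_prod (fun m _ => abs_nonneg _)
          intro m hm
          rw [abs_inv]
          exact inv_anti₀ hlam_pos (hlam i m (Finset.ne_of_mem_erase hm))
      _ = (lam ^ N)⁻¹ := by rw [Finset.prod_const, hcard, inv_pow]
  have h2 : |(∏ m ∈ Finset.univ.erase i, (X - C (v m))).coeff k|
      ≤ (N.choose (N / 2)) * M ^ N := by
    calc |(∏ m ∈ Finset.univ.erase i, (X - C (v m))).coeff k|
        ≤ ((Finset.univ.erase i).card.choose k) * M ^ (Finset.univ.erase i).card :=
          coeff_prod_X_sub_C_abs_le _ v M hM1 (fun m _ => hMv m) k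
      _ = (N.choose k) * M ^ N := by rw [hcard]
      _ ≤ (N.choose (N / 2)) * M ^ N := by
          have : ((N.choose k : ℝ)) ≤ (N.choose (N / 2)) := by
            exact_mod_cast Nat.choose_le_middle k N
          apply mul_le_mul_of_nonneg_right this
          positivity
  calc (∏ m ∈ Finset.univ.erase i, |(v i - v m)⁻¹|)
        * |(∏ m ∈ Finset.univ.erase i, (X - C (v m))).coeff k|
      ≤ (lam ^ N)⁻¹ * ((N.choose (N / 2)) * M ^ N) := by
        apply mul_le_mul h1 h2 (abs_nonneg _)
        positivity
    _ = M ^ N * (N.choose (N / 2)) / lam ^ N := by ring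

lemma sum_coeff_basis_mul_pow (N : ℕ) (v : Fin (N+1) → ℝ) (hv : Function.Injective v)
    (j j' : Fin (N+1)) :
    ∑ i, (Lagrange.basis Finset.univ v i).coeff j * v i ^ (j' : ℕ)
      = if (j : ℕ) = (j' : ℕ) then 1 else 0 := by
  have hdeg : ((X : ℝ[X]) ^ (j' : ℕ)).degree < (Finset.univ : Finset (Fin (N+1))).card := by
    rw [Polynomial.degree_X_pow, Finset.card_univ, Fintype.card_fin]
    exact_mod_cast j'.isLt
  have h := Lagrange.eq_interpolate (v := v) hv.injOn hdeg
  have h2 := congrArg (fun p => Polynomial.coeff p j) h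
  simp only [Lagrange.interpolate_apply, Polynomial.finset_sum_coeff, Polynomial.coeff_C_mul,
    Polynomial.eval_pow, Polynomial.eval_X, Polynomial.coeff_X_pow] at h2
  rw [show (∑ i, (Lagrange.basis Finset.univ v i).coeff j * v i ^ (j' : ℕ))
      = ∑ i, v i ^ (j' : ℕ) * (Lagrange.basis Finset.univ v i).coeff j from
    Finset.sum_congr rfl fun i _ => mul_comm _ _, ← h2]

/-- **Error estimate for multivariate interpolation (Theorem 10).**
For `r ≥ 1` variables, with pairwise distinct nodes `x_{k,0}, …, x_{k,n_k}` in each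
variable `k`, if `a` and `ã` solve the multivariate interpolation systems for data
`f` and `f̃` on the grid of nodes, with `ε = max_i |f_i - f̃_i|`,
`λ_k = min_{i≠j}|x_{k,j} - x_{k,i}|`, and `M_k = max {1, max_j |x_{k,j}|}`, then
`max_j |a_j - ã_j| ≤ ε ∏_{k=1}^r ((n_k+1) M_k^{n_k} C(n_k, ⌊n_k/2⌋) / λ_k^{n_k})`. -/
theorem multivariate_interpolation_coefficient_error
    (r : ℕ) (hr : 1 ≤ r) (n : Fin r → ℕ)
    (x : (k : Fin r) → Fin (n k + 1) → ℝ)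
    (hx : ∀ k, Function.Injective (x k))
    (f ftilde a atilde : ((k : Fin r) → Fin (n k + 1)) → ℝ)
    (ha : ∀ i : (k : Fin r) → Fin (n k + 1),
      ∑ j : (k : Fin r) → Fin (n k + 1), a j * ∏ k : Fin r, x k (i k) ^ ((j k : ℕ)) = f i)
    (hatilde : ∀ i : (k : Fin r) → Fin (n k + 1),
      ∑ j : (k : Fin r) → Fin (n k + 1),
        atilde j * ∏ k : Fin r, x k (i k) ^ ((j k : ℕ)) = ftilde i)
    (ε : ℝ) (lam M : Fin r → ℝ)
    (hε : ε = Finset.univ.sup' Finset.univ_nonempty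
      (fun i : (k : Fin r) → Fin (n k + 1) => |f i - ftilde i|))
    (hlam : ∀ k : Fin r,
      IsLeast {d : ℝ | ∃ i j : Fin (n k + 1), i ≠ j ∧ d = |x k j - x k i|} (lam k))
    (hM : ∀ k : Fin r,
      M k = max 1 (Finset.univ.sup' Finset.univ_nonempty (fun i => |x k i|))) :
    ∀ j : (k : Fin r) → Fin (n k + 1),
      |a j - atilde j| ≤
        ε * ∏ k : Fin r,
          (n k + 1) * M k ^ (n k) * ((n k).choose (n k / 2)) / lam k ^ (n k) := by
  intro j
  have hlam_pos : ∀ k, 0 < lam k := by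
    intro k
    obtain ⟨⟨i, m, hne, heq⟩, -⟩ := hlam k
    rw [heq]
    exact abs_pos.mpr (sub_ne_zero.mpr (fun h => hne ((hx k) h).symm))
  have hlam_le : ∀ k (i m : Fin (n k + 1)), m ≠ i → lam k ≤ |x k i - x k m| :=
    fun k i m hmi => (hlam k).2 ⟨m, i, hmi, rfl⟩
  have hM1 : ∀ k, 1 ≤ M k := fun k => (hM k) ▸ le_max_left _ _
  have hMv : ∀ k i, |x k i| ≤ M k := fun k i =>
    (hM k) ▸ le_trans (Finset.le_sup' (fun i => |x k i|) (Finset.mem_univ i)) (le_max_right _ _)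
  have hg : ∀ i, |f i - ftilde i| ≤ ε := fun i =>
    hε ▸ Finset.le_sup' (fun i => |f i - ftilde i|) (Finset.mem_univ i)
  have hε0 : 0 ≤ ε := le_trans (abs_nonneg _) (hg (fun _ => 0))
  set B : Fin r → ℝ := fun k => M k ^ (n k) * ((n k).choose (n k / 2)) / lam k ^ (n k) with hB
  have hB0 : ∀ k, 0 ≤ B k := by
    intro k
    have h1 := hlam_pos k
    have h2 := hM1 k
    have : (0:ℝ) < M k := lt_of_lt_of_le zero_lt_one h2
    positivity
  have hcoeff : ∀ (k : Fin r) (ik : Fin (n k + 1)),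
      |(Lagrange.basis Finset.univ (x k) ik).coeff (j k)| ≤ B k := fun k ik =>
    coeff_basis_abs_le (n k) (x k) (lam k) (M k) (hlam_pos k) (hlam_le k) (hM1 k)
      (hMv k) ik (j k)
  have key : ∑ i : (k : Fin r) → Fin (n k + 1),
      (∏ k, (Lagrange.basis Finset.univ (x k) (i k)).coeff (j k)) * (f i - ftilde i)
      = a j - atilde j := by
    have expand : ∀ i : (k : Fin r) → Fin (n k + 1),
        f i - ftilde i = ∑ j' : (k : Fin r) → Fin (n k + 1),
          (a j' - atilde j') * ∏ k, x k (i k) ^ ((j' k : ℕ)) := by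
      intro i
      rw [← ha i, ← hatilde i, ← Finset.sum_sub_distrib]
      exact Finset.sum_congr rfl fun j' _ => (sub_mul _ _ _).symm
    calc ∑ i : (k : Fin r) → Fin (n k + 1),
        (∏ k, (Lagrange.basis Finset.univ (x k) (i k)).coeff (j k)) * (f i - ftilde i)
        = ∑ i : (k : Fin r) → Fin (n k + 1), ∑ j' : (k : Fin r) → Fin (n k + 1),
            (a j' - atilde j') * ∏ k,
              ((Lagrange.basis Finset.univ (x k) (i k)).coeff (j k)
                * x k (i k) ^ ((j' k : ℕ))) := by
          refine Finset.sum_congr rfl fun i _ => ?_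
          rw [expand i, Finset.mul_sum]
          refine Finset.sum_congr rfl fun j' _ => ?_
          rw [Finset.prod_mul_distrib]
          ring
      _ = ∑ j' : (k : Fin r) → Fin (n k + 1), (a j' - atilde j') *
            ∑ i : (k : Fin r) → Fin (n k + 1), ∏ k,
              ((Lagrange.basis Finset.univ (x k) (i k)).coeff (j k)
                * x k (i k) ^ ((j' k : ℕ))) := by
          rw [Finset.sum_comm]
          exact Finset.sum_congr rfl fun j' _ => (Finset.mul_sum _ _ _).symm
      _ = ∑ j' : (k : Fin r) → Fin (n k + 1), (a j' - atilde j') *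
            ∏ k, ∑ ik : Fin (n k + 1),
              ((Lagrange.basis Finset.univ (x k) ik).coeff (j k)
                * x k ik ^ ((j' k : ℕ))) := by
          refine Finset.sum_congr rfl fun j' _ => ?_
          rw [Fintype.prod_sum]
      _ = ∑ j' : (k : Fin r) → Fin (n k + 1), (a j' - atilde j') *
            if j' = j then 1 else 0 := by
          refine Finset.sum_congr rfl fun j' _ => ?_
          congr 1
          have hval : ∀ k : Fin r, (∑ ik : Fin (n k + 1),
              (Lagrange.basis Finset.univ (x k) ik).coeff (j k) * x k ik ^ ((j' k : ℕ)))
              = if ((j k : ℕ)) = ((j' k : ℕ)) then 1 else 0 := fun k =>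
            sum_coeff_basis_mul_pow (n k) (x k) (hx k) (j k) (j' k)
          rw [Finset.prod_congr rfl fun k _ => hval k, Fintype.prod_boole]
          have hcond : (∀ k, ((j k : ℕ)) = ((j' k : ℕ))) ↔ j' = j := by
            constructor
            · intro h; funext k; exact Fin.ext (h k).symm
            · intro h; subst h; intro k; rfl
          simp [hcond]
      _ = a j - atilde j := by
          simp [mul_ite, mul_one, mul_zero, Finset.sum_ite_eq', Finset.mem_univ]
  rw [← key]
  calc |∑ i : (k : Fin r) → Fin (n k + 1),
        (∏ k, (Lagrange.basis Finset.univ (x k) (i k)).coeff (j k)) * (f i - ftilde i)|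
      ≤ ∑ i : (k : Fin r) → Fin (n k + 1),
        |(∏ k, (Lagrange.basis Finset.univ (x k) (i k)).coeff (j k)) * (f i - ftilde i)| :=
        Finset.abs_sum_le_sum_abs _ _
    _ ≤ ∑ _i : (k : Fin r) → Fin (n k + 1), (∏ k, B k) * ε := by
        refine Finset.sum_le_sum fun i _ => ?_
        rw [abs_mul]
        refine mul_le_mul ?_ (hg i) (abs_nonneg _) (Finset.prod_nonneg fun k _ => hB0 k)
        rw [Finset.abs_prod]
        exact Finset.prod_le_prod (fun k _ => abs_nonneg _) (fun k _ => hcoeff k (i k))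
    _ = (Fintype.card ((k : Fin r) → Fin (n k + 1)) : ℝ) * ((∏ k, B k) * ε) := by
        rw [Finset.sum_const, nsmul_eq_mul, Finset.card_univ]
    _ = ε * ∏ k : Fin r,
          (n k + 1) * M k ^ (n k) * ((n k).choose (n k / 2)) / lam k ^ (n k) := by
        rw [Fintype.card_pi]
        simp only [Fintype.card_fin, Nat.cast_prod]
        have h1 : (∏ k : Fin r, ((n k + 1 : ℕ) : ℝ)) * ((∏ k, B k) * ε)
            = ε * ∏ k, (((n k + 1 : ℕ) : ℝ) * B k) := by
          rw [Finset.prod_mul_distrib]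
          ring
        rw [h1]
        congr 1
        refine Finset.prod_congr rfl fun k _ => ?_
        simp only [hB]
        push_cast
        ring
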